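/- Let k ≤ n and let X ⊂ ℝ² be an n-independent node set with #X = d(n,k−1)+2 all of whose nodes lie on a curve of degree k. Then this curve is uniquely determined by the nodes: any two polynomials of total degree ≤ k vanishing at all the nodes of X are linearly dependent (equivalently, dim P_{k,X} ≤ 1). -/

import Mathlib

/-!
Put `m = n - k`. Since the nodes are `n`-independent, evaluation at `X` maps `Π_n` onto `ℝ^X`,
so `dim P_{n,X} = N_n - #X = N_{m+1} - 2`. For nonzero `p ∈ P_{k,X}` the space `p · Π_j` lies in
`P_{deg p + j, X}` and has dimension `N_j`; taking `j = m + 1` shows that `deg p = k`.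
If `p, q ∈ P_{k,X}` were not proportional, their lcm would have degree `> k`, so
`p · Π_m ∩ q · Π_m ⊆ lcm(p, q) · Π_{m-1}` (and it is `0` when `m = 0`). Then
`dim (p · Π_m + q · Π_m) ≥ 2 N_m - N_{m-1} = N_{m+1} - 1`, too large for a subspace of
`P_{n,X}`.
-/

open MvPolynomial

noncomputable section

/-- A node (point) in the plane. -/
abbrev Pt : Type := Fin 2 → ℝ

/-- `p` is an `n`-fundamental polynomial of the node `A` with respect to the node set `X`. -/
def IsFund (n : ℕ) (X : Finset Pt) (A : Pt) (p : MvPolynomial (Fin 2) ℝ) : Prop :=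
  p.totalDegree ≤ n ∧ eval A p = 1 ∧ ∀ B ∈ X, B ≠ A → eval B p = 0

/-- The node set `X` is `n`-independent. -/
def NIndep (n : ℕ) (X : Finset Pt) : Prop := ∀ A ∈ X, ∃ p, IsFund n X A p

/-- `N_m = dim Π_m = (m+1)(m+2)/2`. -/
def Nn (m : ℕ) : ℕ := (m + 1) * (m + 2) / 2

/-- `d(n,k) = N_n - N_{n-k}`. -/
def dnk (n k : ℕ) : ℕ := Nn n - Nn (n - k)

/-- The space `P_{k,X}` of polynomials of total degree at most `k` vanishing on `X`. -/
def PkX (k : ℕ) (X : Finset Pt) : Submodule ℝ (MvPolynomial (Fin 2) ℝ) :=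
  restrictTotalDegree (Fin 2) ℝ k ⊓
    ⨅ A ∈ X, LinearMap.ker (aeval (R := ℝ) (S₁ := ℝ) (A : Fin 2 → ℝ)).toLinearMap

theorem Nn_succ (m : ℕ) : Nn (m + 1) = Nn m + (m + 2) := by
  unfold Nn
  rw [show (m + 1 + 1) * (m + 1 + 2) = (m + 1) * (m + 2) + (m + 2) * 2 by ring,
    Nat.add_mul_div_right _ _ two_pos]

theorem Nn_mono : Monotone Nn :=
  monotone_nat_of_le_succ fun m => by rw [Nn_succ]; omega

theorem Nn_eq_sum_range (m : ℕ) : Nn m = ∑ d ∈ Finset.range (m + 1), (d + 1) := by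
  induction m with
  | zero => rfl
  | succ m ih => rw [Nn_succ, Finset.sum_range_succ, ih]

theorem finrank_restrictTotalDegree_fin_two (K : Type*) [Field K] (m : ℕ) :
    Module.finrank K (restrictTotalDegree (Fin 2) K m) = Nn m := by
  classical
  have hS : {s : Fin 2 →₀ ℕ | (s.sum fun _ e => e) ≤ m} =
      ↑((Finset.range (m + 1)).biUnion
        fun d => (Finset.univ : Finset (Fin 2)).finsuppAntidiag d) := by
    ext s
    simp [Finset.mem_finsuppAntidiag, Finsupp.sum_fintype]
  rw [restrictTotalDegree, Module.finrank_eq_nat_card_basis (basisRestrictSupport K _), hS,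
    Nat.card_coe_set_eq, Set.ncard_coe_finset, Finset.card_biUnion, Nn_eq_sum_range]
  · refine Finset.sum_congr rfl fun d _ => ?_
    rw [Finset.card_finsuppAntidiag_nat_eq_choose, Finset.card_univ, Fintype.card_fin,
      show 2 + d - 1 = d + 1 by omega, Nat.choose_succ_self_right]
  · intro d _ e _ hde
    simp only [Function.onFun, Finset.disjoint_left, Finset.mem_finsuppAntidiag]
    grind

section MulRestrict

variable {σ K : Type*} [Field K]

theorem exists_eq_C_mul_of_dvd_of_totalDegree_le {p l : MvPolynomial σ K} (hpl : p ∣ l)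
    (hl : l ≠ 0) (hdeg : l.totalDegree ≤ p.totalDegree) :
    ∃ c : K, c ≠ 0 ∧ l = C c * p := by
  obtain ⟨t, rfl⟩ := hpl
  have ht : t ≠ 0 := right_ne_zero_of_mul hl
  rw [totalDegree_mul_of_isDomain (left_ne_zero_of_mul hl) ht] at hdeg
  obtain ⟨c, rfl⟩ : ∃ c, t = C c := ⟨_, totalDegree_eq_zero_iff_eq_C.mp (by omega)⟩
  exact ⟨c, by simpa using ht, mul_comm _ _⟩

theorem totalDegree_lt_totalDegree_lcm [GCDMonoid (MvPolynomial σ K)]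
    {p q : MvPolynomial σ K} (hp : p ≠ 0) (hq : q ≠ 0) (hdeg : p.totalDegree = q.totalDegree)
    (hpq : p ∉ K ∙ q) :
    p.totalDegree < (lcm p q).totalDegree := by
  have hl : lcm p q ≠ 0 := lcm_ne_zero_iff.mpr ⟨hp, hq⟩
  refine (totalDegree_le_of_dvd_of_isDomain (dvd_lcm_left p q) hl).lt_of_ne fun h => hpq ?_
  obtain ⟨a, ha, hla⟩ := exists_eq_C_mul_of_dvd_of_totalDegree_le (dvd_lcm_left p q) hl h.ge
  obtain ⟨b, -, hlb⟩ :=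
    exists_eq_C_mul_of_dvd_of_totalDegree_le (dvd_lcm_right p q) hl (hdeg ▸ h.ge)
  refine Submodule.mem_span_singleton.mpr ⟨a⁻¹ * b, ?_⟩
  rw [smul_eq_C_mul, C_mul, mul_assoc, ← hlb, hla, ← mul_assoc, ← C_mul, inv_mul_cancel₀ ha,
    C_1, one_mul]

variable (K) in
/-- The space `f · Π_m`. -/
def mulRestrictTotalDegree (f : MvPolynomial σ K) (m : ℕ) : Submodule K (MvPolynomial σ K) :=
  (restrictTotalDegree σ K m).map (LinearMap.mulLeft K f)

instance [Finite σ] (f : MvPolynomial σ K) (m : ℕ) :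
    Module.Finite K (mulRestrictTotalDegree K f m) :=
  Module.Finite.map _ _

theorem mem_mulRestrictTotalDegree {f x : MvPolynomial σ K} {m : ℕ} :
    x ∈ mulRestrictTotalDegree K f m ↔
      ∃ r : MvPolynomial σ K, r.totalDegree ≤ m ∧ f * r = x := by
  simp [mulRestrictTotalDegree, mem_restrictTotalDegree]

theorem finrank_mulRestrictTotalDegree {f : MvPolynomial σ K} (hf : f ≠ 0) (m : ℕ) :
    Module.finrank K (mulRestrictTotalDegree K f m) =
      Module.finrank K (restrictTotalDegree σ K m) :=
  (Submodule.equivMapOfInjective _ (mul_right_injective₀ hf) _).finrank_eq.symm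

theorem exists_eq_lcm_mul_of_mem_inf [GCDMonoid (MvPolynomial σ K)] {p q x : MvPolynomial σ K}
    {m : ℕ} (hx : x ∈ mulRestrictTotalDegree K p m ⊓ mulRestrictTotalDegree K q m)
    (hx0 : x ≠ 0) :
    ∃ t, x = lcm p q * t ∧ (lcm p q).totalDegree + t.totalDegree ≤ p.totalDegree + m := by
  obtain ⟨⟨r, hr, rfl⟩, ⟨s, -, hs⟩⟩ := And.imp mem_mulRestrictTotalDegree.mp
    mem_mulRestrictTotalDegree.mp (Submodule.mem_inf.mp hx)
  obtain ⟨t, ht⟩ := lcm_dvd (dvd_mul_right p r) ⟨s, hs.symm⟩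
  refine ⟨t, ht, ?_⟩
  rw [← totalDegree_mul_of_isDomain (left_ne_zero_of_mul (ht ▸ hx0))
    (right_ne_zero_of_mul (ht ▸ hx0)), ← ht]
  exact (totalDegree_mul p r).trans (by omega)

end MulRestrict

section Plane

variable {K : Type*} [Field K] [GCDMonoid (MvPolynomial (Fin 2) K)]
  {p q : MvPolynomial (Fin 2) K}

theorem finrank_inf_mulRestrictTotalDegree_add_le (hp : p ≠ 0) (hq : q ≠ 0)
    (hdeg : p.totalDegree = q.totalDegree) (hpq : p ∉ K ∙ q) (m : ℕ) :
    Module.finrank K ↥(mulRestrictTotalDegree K p m ⊓ mulRestrictTotalDegree K q m) + (m + 1)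
      ≤ Nn m := by
  have hlcm := totalDegree_lt_totalDegree_lcm hp hq hdeg hpq
  cases m with
  | zero =>
    suffices mulRestrictTotalDegree K p 0 ⊓ mulRestrictTotalDegree K q 0 = ⊥ by
      rw [this, finrank_bot]; rfl
    refine (Submodule.eq_bot_iff _).mpr fun x hx => by_contra fun hx0 => ?_
    obtain ⟨t, -, ht⟩ := exists_eq_lcm_mul_of_mem_inf hx hx0
    omega
  | succ j =>
    have hle : mulRestrictTotalDegree K p (j + 1) ⊓ mulRestrictTotalDegree K q (j + 1) ≤
        mulRestrictTotalDegree K (lcm p q) j := by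
      intro x hx
      rcases eq_or_ne x 0 with rfl | hx0
      · exact Submodule.zero_mem _
      obtain ⟨t, rfl, ht⟩ := exists_eq_lcm_mul_of_mem_inf hx hx0
      exact mem_mulRestrictTotalDegree.mpr ⟨t, by omega, rfl⟩
    have := Submodule.finrank_mono hle
    rw [finrank_mulRestrictTotalDegree (lcm_ne_zero_iff.mpr ⟨hp, hq⟩),
      finrank_restrictTotalDegree_fin_two] at this
    rw [Nn_succ]
    omega

theorem Nn_succ_le_finrank_sup_mulRestrictTotalDegree_add_one (hp : p ≠ 0) (hq : q ≠ 0)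
    (hdeg : p.totalDegree = q.totalDegree) (hpq : p ∉ K ∙ q) (m : ℕ) :
    Nn (m + 1) ≤
      Module.finrank K ↥(mulRestrictTotalDegree K p m ⊔ mulRestrictTotalDegree K q m) + 1 := by
  have hsum := Submodule.finrank_sup_add_finrank_inf_eq
    (mulRestrictTotalDegree K p m) (mulRestrictTotalDegree K q m)
  rw [finrank_mulRestrictTotalDegree hp, finrank_mulRestrictTotalDegree hq,
    finrank_restrictTotalDegree_fin_two] at hsum
  have := finrank_inf_mulRestrictTotalDegree_add_le hp hq hdeg hpq m
  rw [Nn_succ]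
  omega

end Plane

section Nodes

def evalOnNodes (X : Finset Pt) : MvPolynomial (Fin 2) ℝ →ₗ[ℝ] (X → ℝ) :=
  LinearMap.pi fun A => (aeval (R := ℝ) (S₁ := ℝ) (A : Pt)).toLinearMap

theorem evalOnNodes_apply (X : Finset Pt) (p : MvPolynomial (Fin 2) ℝ) (A : X) :
    evalOnNodes X p A = eval (A : Pt) p := by
  simp [evalOnNodes]

theorem PkX_eq_inf_ker (k : ℕ) (X : Finset Pt) :
    PkX k X = restrictTotalDegree (Fin 2) ℝ k ⊓ LinearMap.ker (evalOnNodes X) := by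
  rw [PkX, evalOnNodes, LinearMap.ker_pi, iInf_subtype']

theorem mem_PkX {k : ℕ} {X : Finset Pt} {p : MvPolynomial (Fin 2) ℝ} :
    p ∈ PkX k X ↔ p.totalDegree ≤ k ∧ ∀ A ∈ X, eval A p = 0 := by
  simp [PkX_eq_inf_ker, mem_restrictTotalDegree, funext_iff, evalOnNodes_apply]

instance (k : ℕ) (X : Finset Pt) : Module.Finite ℝ (PkX k X) :=
  Submodule.finiteDimensional_of_le (PkX_eq_inf_ker k X ▸ inf_le_left)

theorem finrank_PkX_add_card {n : ℕ} {X : Finset Pt} (hind : NIndep n X) :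
    Module.finrank ℝ (PkX n X) + X.card = Nn n := by
  set E := (evalOnNodes X).domRestrict (restrictTotalDegree (Fin 2) ℝ n)
  have hker : Module.finrank ℝ (LinearMap.ker E) = Module.finrank ℝ (PkX n X) := by
    rw [LinearMap.ker_domRestrict, ← Submodule.finrank_map_subtype_eq,
      Submodule.map_comap_subtype, PkX_eq_inf_ker]
  have hrange : LinearMap.range E = ⊤ := by
    rw [← top_le_iff, ← (Pi.basisFun ℝ X).span_eq, Submodule.span_le]
    rintro _ ⟨A, rfl⟩
    obtain ⟨f, hdeg, h1, h0⟩ := hind A A.2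
    refine ⟨⟨f, (mem_restrictTotalDegree _ _ _).mpr hdeg⟩, funext fun B => ?_⟩
    rw [LinearMap.domRestrict_apply, evalOnNodes_apply, Pi.basisFun_apply]
    by_cases hBA : B = A
    · rw [hBA, Pi.single_eq_same, h1]
    · rw [Pi.single_eq_of_ne hBA, h0 B B.2 (Subtype.coe_ne_coe.mpr hBA)]
  have := LinearMap.finrank_range_add_finrank_ker E
  rw [hker, hrange, finrank_top, Module.finrank_fintype_fun_eq_card, Fintype.card_coe,
    finrank_restrictTotalDegree_fin_two] at this
  omega

theorem mulRestrictTotalDegree_le_PkX {k m n : ℕ} {X : Finset Pt} {f : MvPolynomial (Fin 2) ℝ}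
    (hf : f ∈ PkX k X) (hn : k + m ≤ n) : mulRestrictTotalDegree ℝ f m ≤ PkX n X := by
  rintro _ hx
  obtain ⟨r, hr, rfl⟩ := mem_mulRestrictTotalDegree.mp hx
  obtain ⟨hfk, hfX⟩ := mem_PkX.mp hf
  exact mem_PkX.mpr ⟨(totalDegree_mul f r).trans (by omega),
    fun A hA => by rw [map_mul, hfX A hA, zero_mul]⟩

variable {n k : ℕ} {X : Finset Pt}

theorem finrank_PkX_add_two (hk : 1 ≤ k) (hkn : k ≤ n) (hind : NIndep n X)
    (hcard : X.card = dnk n (k - 1) + 2) :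
    Module.finrank ℝ (PkX n X) + 2 = Nn (n - k + 1) := by
  have h := finrank_PkX_add_card hind
  have hmono : Nn (n - k + 1) ≤ Nn n := Nn_mono (by omega)
  rw [hcard, dnk, show n - (k - 1) = n - k + 1 by omega] at h
  omega

theorem totalDegree_eq_of_mem_PkX (hkn : k ≤ n)
    (hdim : Module.finrank ℝ (PkX n X) + 2 = Nn (n - k + 1))
    {p : MvPolynomial (Fin 2) ℝ} (hp : p ∈ PkX k X) (hp0 : p ≠ 0) : p.totalDegree = k := by
  obtain ⟨hpk, hpX⟩ := mem_PkX.mp hp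
  by_contra hne
  have hle := mulRestrictTotalDegree_le_PkX (mem_PkX.mpr ⟨le_rfl, hpX⟩)
    (show p.totalDegree + (n - k + 1) ≤ n by omega)
  have := Submodule.finrank_mono hle
  rw [finrank_mulRestrictTotalDegree hp0, finrank_restrictTotalDegree_fin_two] at this
  omega

theorem mem_span_of_mem_PkX (hkn : k ≤ n)
    (hdim : Module.finrank ℝ (PkX n X) + 2 = Nn (n - k + 1))
    {p q : MvPolynomial (Fin 2) ℝ} (hp : p ∈ PkX k X) (hq : q ∈ PkX k X) (hq0 : q ≠ 0) :
    p ∈ ℝ ∙ q := by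
  by_contra hpq
  have hp0 : p ≠ 0 := fun h => hpq (h ▸ Submodule.zero_mem _)
  let := UniqueFactorizationMonoid.toGCDMonoid (MvPolynomial (Fin 2) ℝ)
  have hdeg : p.totalDegree = q.totalDegree := by
    rw [totalDegree_eq_of_mem_PkX hkn hdim hp hp0, totalDegree_eq_of_mem_PkX hkn hdim hq hq0]
  have hsup :
      mulRestrictTotalDegree ℝ p (n - k) ⊔ mulRestrictTotalDegree ℝ q (n - k) ≤ PkX n X :=
    sup_le (mulRestrictTotalDegree_le_PkX hp (by omega))
      (mulRestrictTotalDegree_le_PkX hq (by omega))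
  have := Submodule.finrank_mono hsup
  have := Nn_succ_le_finrank_sup_mulRestrictTotalDegree_add_one hp0 hq0 hdeg hpq (n - k)
  omega

end Nodes

/-- **Theorem 1.** An `n`-independent set of `d(n,k-1)+2` nodes lying in a curve of degree
`k ≤ n` determines the curve uniquely. -/
theorem stmt12 (n k : ℕ) (hk : 1 ≤ k) (hkn : k ≤ n) (X : Finset Pt)
    (hind : NIndep n X) (hcard : X.card = dnk n (k - 1) + 2)
    (q : MvPolynomial (Fin 2) ℝ) (hq : q ≠ 0) (hqdeg : q.totalDegree = k)
    (hqvan : ∀ A ∈ X, eval A q = 0) :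
    Module.finrank ℝ (PkX k X) ≤ 1 := by
  have hdim := finrank_PkX_add_two hk hkn hind hcard
  have hqX : q ∈ PkX k X := mem_PkX.mpr ⟨hqdeg.le, hqvan⟩
  calc Module.finrank ℝ (PkX k X)
      ≤ Module.finrank ℝ (ℝ ∙ q) :=
        Submodule.finrank_mono fun p hp => mem_span_of_mem_PkX hkn hdim hp hqX hq
    _ = 1 := finrank_span_singleton hq
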